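/- If (G,σ) is a binary-explainable BMG, then its binary-refinable tree (BRT) is a refinement of its least resolved tree (LRT). -/

import Mathlib

/-- A rooted phylogenetic tree with leaf set `V`, encoded by its hierarchy of clusters
(the cluster of a vertex is the set of leaves below it; inner vertices of a phylogenetic
tree have at least two children, so vertices correspond bijectively to clusters). -/
structure PhyloTree (V : Type*) where
  clusters : Set (Set V)
  nonempty_of_mem : ∀ A ∈ clusters, A.Nonempty
  univ_mem : Set.univ ∈ clusters
  singleton_mem : ∀ v : V, {v} ∈ clusters
  nested : ∀ A ∈ clusters, ∀ B ∈ clusters, A ⊆ B ∨ B ⊆ A ∨ Disjoint A B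

namespace PhyloTree

variable {V : Type*}

/-- The cluster of the last common ancestor of `x` and `y`: the smallest cluster
containing both (the clusters containing `x` and `y` form a chain, so their
intersection is the smallest one). -/
def lca (T : PhyloTree V) (x y : V) : Set V :=
  ⋂₀ {A | A ∈ T.clusters ∧ x ∈ A ∧ y ∈ A}

/-- The rooted triple `xy|z` (on three pairwise distinct leaves) is displayed by `T`:
`lca(x,y) ≺ lca(x,z) = lca(y,z)`. -/
def Displays (T : PhyloTree V) (x y z : V) : Prop :=
  x ≠ y ∧ x ≠ z ∧ y ≠ z ∧ T.lca x y ⊂ T.lca x z ∧ T.lca x z = T.lca y z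

/-- `T` displays every triple of `R`; a triple `(x, y, z)` encodes `xy|z`. -/
def DisplaysSet (T : PhyloTree V) (R : Set (V × V × V)) : Prop :=
  ∀ t ∈ R, T.Displays t.1 t.2.1 t.2.2

/-- `r(T)`, the set of triples displayed by `T`. -/
def triples (T : PhyloTree V) : Set (V × V × V) :=
  {t | T.Displays t.1 t.2.1 t.2.2}

/-- `T` is binary: every inner vertex (cluster with at least two leaves) has exactly
two children, i.e. splits into two disjoint proper subclusters. -/
def IsBinary (T : PhyloTree V) : Prop :=
  ∀ A ∈ T.clusters, 1 < A.ncard →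
    ∃ B ∈ T.clusters, ∃ D ∈ T.clusters,
      Disjoint B D ∧ B ∪ D = A ∧ B ⊂ A ∧ D ⊂ A

/-- `T'` is a refinement of `T`: they have the same leaf set and `T` is obtained from
`T'` by contracting inner edges, i.e. every cluster of `T` is a cluster of `T'`. -/
def Refines (T' T : PhyloTree V) : Prop :=
  T.clusters ⊆ T'.clusters

end PhyloTree

section BMG

variable {V C : Type*}

/-- `y` is a best match of `x` in the leaf-colored tree `(T,σ)`. -/
def bestMatch (T : PhyloTree V) (σ : V → C) (x y : V) : Prop :=
  σ x ≠ σ y ∧ ∀ y' : V, σ y' = σ y → T.lca x y ⊆ T.lca x y'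

/-- The leaf-colored tree `(T,σ)` explains the vertex-colored digraph `(E,σ)`,
i.e. `(E,σ)` is the best match graph of `(T,σ)`. -/
def Explains (T : PhyloTree V) (σ : V → C) (E : V → V → Prop) : Prop :=
  ∀ x y, E x y ↔ bestMatch T σ x y

/-- `(E,σ)` is a best match graph. -/
def IsBMG (E : V → V → Prop) (σ : V → C) : Prop :=
  ∃ T : PhyloTree V, Explains T σ E

/-- `(E,σ)` is binary-explainable. -/
def BinaryExplainable (E : V → V → Prop) (σ : V → C) : Prop :=
  ∃ T : PhyloTree V, T.IsBinary ∧ Explains T σ E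

/-- The informative triples `R(G,σ)`: `(a,b,b')` encodes `ab|b'`. -/
def informativeTriples (E : V → V → Prop) (σ : V → C) : Set (V × V × V) :=
  {t | σ t.1 ≠ σ t.2.1 ∧ σ t.2.1 = σ t.2.2 ∧ E t.1 t.2.1 ∧ ¬ E t.1 t.2.2}

/-- The forbidden triples `F(G,σ)`: `(a,b,b')` encodes `ab|b'`. -/
def forbiddenTriples (E : V → V → Prop) (σ : V → C) : Set (V × V × V) :=
  {t | σ t.1 ≠ σ t.2.1 ∧ σ t.2.1 = σ t.2.2 ∧ t.2.1 ≠ t.2.2 ∧ E t.1 t.2.1 ∧ E t.1 t.2.2}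

/-- The extended triple set `R^bin(G,σ) = R(G,σ) ∪ {bb'|a : ab|b' ∈ F(G,σ)}`. -/
def Rbin (E : V → V → Prop) (σ : V → C) : Set (V × V × V) :=
  informativeTriples E σ ∪ {t | (t.2.2, t.1, t.2.1) ∈ forbiddenTriples E σ}

/-- Properly colored: arcs only between vertices of distinct colors. -/
def ProperlyColored (E : V → V → Prop) (σ : V → C) : Prop :=
  ∀ x y, E x y → σ x ≠ σ y

/-- sf-colored: properly colored and every vertex has, for each color (of the graph)
different from its own, at least one out-neighbor of that color. -/
def SfColored (E : V → V → Prop) (σ : V → C) : Prop :=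
  ProperlyColored E σ ∧ ∀ x y : V, σ y ≠ σ x → ∃ z, E x z ∧ σ z = σ y

/-- A triple set is consistent if some tree displays all of its triples. -/
def Consistent (R : Set (V × V × V)) : Prop :=
  ∃ T : PhyloTree V, T.DisplaysSet R

/-- The closure `cl(R)`: all triples displayed by every tree displaying `R`. -/
def tripleClosure (R : Set (V × V × V)) : Set (V × V × V) :=
  {t | ∀ T : PhyloTree V, T.DisplaysSet R → T.Displays t.1 t.2.1 t.2.2}

/-- `(T,σ)` is a least resolved tree for `(E,σ)`: it explains `(E,σ)` and no tree
obtained from it by contracting an edge (i.e. by removing a non-root inner cluster)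
explains `(E,σ)`. -/
def IsLRT (T : PhyloTree V) (σ : V → C) (E : V → V → Prop) : Prop :=
  Explains T σ E ∧
    ∀ A ∈ T.clusters, A ≠ Set.univ → 1 < A.ncard →
      ∀ T' : PhyloTree V, T'.clusters = T.clusters \ {A} → ¬ Explains T' σ E

end BMG

section Aho

variable {V : Type*}

/-- Adjacency in the Aho graph `[R,L]`: `x` and `y` are joined whenever `xy|z ∈ R`
for some `z ∈ L` (only triples with all leaves in `L` are taken into account). -/
def ahoAdj (R : Set (V × V × V)) (L : Set V) (x y : V) : Prop :=
  x ∈ L ∧ y ∈ L ∧ ∃ z ∈ L, (x, y, z) ∈ R ∨ (y, x, z) ∈ R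

/-- The vertex set of the connected component of `x` in the Aho graph `[R,L]`. -/
def ahoComponent (R : Set (V × V × V)) (L : Set V) (x : V) : Set V :=
  {y | Relation.ReflTransGen (ahoAdj R L) x y}

/-- The clusters of the Aho tree `Aho(R, V)`: the full leaf set, and recursively the
connected components of the Aho graphs. -/
inductive IsAhoCluster (R : Set (V × V × V)) : Set V → Prop
  | univ : IsAhoCluster R Set.univ
  | component {L : Set V} {x : V} :
      IsAhoCluster R L → x ∈ L → IsAhoCluster R (ahoComponent R L x)

/-- `T` is the Aho tree (`BUILD` tree) of the triple set `R` on the full leaf set. -/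
def IsAhoTree (R : Set (V × V × V)) (T : PhyloTree V) : Prop :=
  T.clusters = {A | IsAhoCluster R A}

/-- The union of the leaf sets of the triples in `R`. -/
def tripleLeaves (R : Set (V × V × V)) : Set V :=
  {v | ∃ t ∈ R, v = t.1 ∨ v = t.2.1 ∨ v = t.2.2}

end Aho


/-!
The BRT explains `(G,σ)`: it displays `R^bin(G,σ)`, and in a tree displaying these triples the
best matches are exactly the arcs of `G`. It therefore suffices that every tree `T` explaining
`(G,σ)` refines the LRT. Since the LRT is least resolved, each of its non-trivial clusters `B`
has a witness: an arc `(x,b)` with `lca(x,b) = B` and a leaf `y` of color `σ(b)` with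
`lca(x,y)` the parent of `B`. Such a witness forces `B` to be a cluster of `T` as well.
-/
namespace PhyloTree

variable {V : Type*} (T : PhyloTree V)

theorem subset_or_subset_of_mem {A A' : Set V} (hA : A ∈ T.clusters) (hA' : A' ∈ T.clusters)
    {x : V} (hx : x ∈ A) (hx' : x ∈ A') : A ⊆ A' ∨ A' ⊆ A := by
  rcases T.nested A hA A' hA' with h | h | h
  · exact .inl h
  · exact .inr h
  · exact absurd rfl (h.ne_of_mem hx hx')

theorem lca_subset {A : Set V} {x y : V} (hA : A ∈ T.clusters) (hx : x ∈ A) (hy : y ∈ A) :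
    T.lca x y ⊆ A :=
  Set.sInter_subset_of_mem ⟨hA, hx, hy⟩

theorem lca_eq_of_forall {A : Set V} {x y : V} (hA : A ∈ T.clusters) (hx : x ∈ A) (hy : y ∈ A)
    (hleast : ∀ A' ∈ T.clusters, x ∈ A' → y ∈ A' → A ⊆ A') : T.lca x y = A :=
  (T.lca_subset hA hx hy).antisymm <| Set.subset_sInter fun A' ⟨hA', hxA', hyA'⟩ ↦
    hleast A' hA' hxA' hyA'

theorem lca_comm (x y : V) : T.lca x y = T.lca y x := by
  simp only [lca, and_comm (a := x ∈ _)]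

section Finite

variable [Finite V]

theorem exists_least_cluster (x y : V) :
    ∃ A ∈ T.clusters, x ∈ A ∧ y ∈ A ∧ ∀ A' ∈ T.clusters, x ∈ A' → y ∈ A' → A ⊆ A' := by
  obtain ⟨A, ⟨hA, hxA, hyA⟩, hmin⟩ :=
    (Set.toFinite {A | A ∈ T.clusters ∧ x ∈ A ∧ y ∈ A}).exists_minimal
      ⟨Set.univ, T.univ_mem, trivial, trivial⟩
  refine ⟨A, hA, hxA, hyA, fun A' hA' hxA' hyA' ↦ ?_⟩
  rcases T.subset_or_subset_of_mem hA hA' hxA hxA' with h | h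
  · exact h
  · exact hmin ⟨hA', hxA', hyA'⟩ h

theorem lca_mem (x y : V) : T.lca x y ∈ T.clusters := by
  obtain ⟨A, hA, hx, hy, hleast⟩ := T.exists_least_cluster x y
  rwa [T.lca_eq_of_forall hA hx hy hleast]

theorem mem_lca_left (x y : V) : x ∈ T.lca x y := by
  obtain ⟨A, hA, hx, hy, hleast⟩ := T.exists_least_cluster x y
  rwa [T.lca_eq_of_forall hA hx hy hleast]

theorem mem_lca_right (x y : V) : y ∈ T.lca x y := by
  obtain ⟨A, hA, hx, hy, hleast⟩ := T.exists_least_cluster x y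
  rwa [T.lca_eq_of_forall hA hx hy hleast]

theorem lca_subset_or_subset (x y y' : V) : T.lca x y ⊆ T.lca x y' ∨ T.lca x y' ⊆ T.lca x y :=
  T.subset_or_subset_of_mem (T.lca_mem x y) (T.lca_mem x y') (T.mem_lca_left x y)
    (T.mem_lca_left x y')

theorem subset_lca_of_mem_of_not_mem {A : Set V} {x y : V} (hA : A ∈ T.clusters) (hx : x ∈ A)
    (hy : y ∉ A) : A ⊆ T.lca x y := by
  rcases T.subset_or_subset_of_mem (T.lca_mem x y) hA (T.mem_lca_left x y) hx with h | h
  · exact absurd (h (T.mem_lca_right x y)) hy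
  · exact h

theorem lca_eq_lca_of_ssubset {x y y' : V} (h : T.lca x y' ⊂ T.lca x y) :
    T.lca x y = T.lca y' y := by
  apply subset_antisymm
  · have hy : y ∉ T.lca x y' := fun hy ↦ h.not_subset (T.lca_subset (T.lca_mem x y')
      (T.mem_lca_left x y') hy)
    have := T.subset_lca_of_mem_of_not_mem (T.lca_mem x y') (T.mem_lca_right x y') hy
    exact T.lca_subset (T.lca_mem y' y) (this (T.mem_lca_left x y')) (T.mem_lca_right y' y)
  · exact T.lca_subset (T.lca_mem x y) (h.subset (T.mem_lca_right x y')) (T.mem_lca_right x y)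

theorem displays_of_mem_of_not_mem {A : Set V} {x y z : V} (hA : A ∈ T.clusters) (hxy : x ≠ y)
    (hx : x ∈ A) (hy : y ∈ A) (hz : z ∉ A) : T.Displays x y z := by
  have hxz := T.subset_lca_of_mem_of_not_mem hA hx hz
  have hyz := T.subset_lca_of_mem_of_not_mem hA hy hz
  refine ⟨hxy, ne_of_mem_of_not_mem hx hz, ne_of_mem_of_not_mem hy hz, ?_, ?_⟩
  · exact (T.lca_subset hA hx hy).trans_ssubset <|
      Set.ssubset_iff_subset_ne.2 ⟨hxz, fun h ↦ hz (h ▸ T.mem_lca_right x z)⟩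
  · exact (T.lca_subset (T.lca_mem y z) (hyz hx) (T.mem_lca_right y z)).antisymm
      (T.lca_subset (T.lca_mem x z) (hxz hy) (T.mem_lca_right x z))

end Finite

end PhyloTree

section Aho

variable {V : Type*} {R : Set (V × V × V)}

theorem ahoComponent_subset {L : Set V} {x : V} (hx : x ∈ L) : ahoComponent R L x ⊆ L := by
  intro y hy
  induction hy with
  | refl => exact hx
  | tail _ hadj _ => exact hadj.2.1

theorem ahoComponent_mono {L K : Set V} (hLK : L ⊆ K) (x : V) :
    ahoComponent R L x ⊆ ahoComponent R K x :=
  fun _ ↦ Relation.ReflTransGen.mono (r := ahoAdj R L) (p := ahoAdj R K)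
    (fun _ _ ⟨ha, hb, z, hz, ht⟩ ↦ ⟨hLK ha, hLK hb, z, hLK hz, ht⟩) _ _

theorem ahoComponent_subset_of_mem {L : Set V} {x y : V} (h : y ∈ ahoComponent R L x) :
    ahoComponent R L y ⊆ ahoComponent R L x :=
  fun _ ↦ h.trans

variable {T : PhyloTree V}

theorem IsAhoTree.mem_clusters_iff (hT : IsAhoTree R T) {A : Set V} :
    A ∈ T.clusters ↔ IsAhoCluster R A := by
  rw [hT]; rfl

theorem IsAhoTree.ahoComponent_ssubset_of_ssubset (hT : IsAhoTree R T) {A : Set V}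
    (hA : IsAhoCluster R A) {L : Set V} (hL : IsAhoCluster R L) (hAL : A ⊂ L) {p : V}
    (hp : p ∈ A) : ahoComponent R L p ⊂ L := by
  induction hA generalizing p with
  | univ => exact absurd (Set.subset_univ L) hAL.not_subset
  | @component K x hK hxK ih =>
    by_cases hKL : K ⊂ L
    · exact ih hKL (ahoComponent_subset hxK hp)
    have hLK : L ⊆ K := by
      rcases T.subset_or_subset_of_mem (hT.mem_clusters_iff.2 hK) (hT.mem_clusters_iff.2 hL) hxK
        (hAL.subset .refl) with h | h
      · exact ((Set.eq_or_ssubset_of_subset h).resolve_right hKL).symm.subset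
      · exact h
    exact ((ahoComponent_mono hLK p).trans (ahoComponent_subset_of_mem hp)).trans_ssubset hAL

theorem IsAhoTree.ahoComponent_ssubset (hT : IsAhoTree R T) {L : Set V} (hL : IsAhoCluster R L)
    {p q : V} (hp : p ∈ L) (hq : q ∈ L) (hpq : p ≠ q) : ahoComponent R L p ⊂ L :=
  hT.ahoComponent_ssubset_of_ssubset (hT.mem_clusters_iff.1 (T.singleton_mem p)) hL
    (Set.ssubset_iff_subset_ne.2 ⟨Set.singleton_subset_iff.2 hp,
      fun h ↦ hpq (Set.mem_singleton_iff.1 (h ▸ hq)).symm⟩) rfl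

/-- Descending through the components of the Aho graphs, `p` and `q` stay together until `z`
is split off from them. -/
theorem IsAhoTree.displays [Finite V] (hT : IsAhoTree R T) {p q z : V} (hR : (p, q, z) ∈ R)
    (hpq : p ≠ q) : T.Displays p q z := by
  suffices ∀ L, IsAhoCluster R L → p ∈ L → q ∈ L → z ∈ L → T.Displays p q z from
    this _ .univ trivial trivial trivial
  intro L
  induction L using WellFoundedLT.induction with
  | _ L ih =>
    intro hL hp hq hz
    have hqC : q ∈ ahoComponent R L p := .single ⟨hp, hq, z, hz, .inl hR⟩
    have hC : IsAhoCluster R (ahoComponent R L p) := hL.component hp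
    by_cases hzC : z ∈ ahoComponent R L p
    · exact ih _ (hT.ahoComponent_ssubset hL hp hq hpq) hC .refl hqC hzC
    · exact T.displays_of_mem_of_not_mem (hT.mem_clusters_iff.2 hC) hpq .refl hqC hzC

theorem IsAhoTree.displaysSet [Finite V] (hT : IsAhoTree R T) (hR : ∀ t ∈ R, t.1 ≠ t.2.1) :
    T.DisplaysSet R :=
  fun _ ht ↦ hT.displays ht (hR _ ht)

end Aho

namespace Explains

variable {V C : Type*} {E : V → V → Prop} {σ : V → C} {T : PhyloTree V}

theorem color_ne (hT : Explains T σ E) {x y : V} (h : E x y) : σ x ≠ σ y :=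
  ((hT x y).1 h).1

theorem lca_subset_lca (hT : Explains T σ E) {x b u : V} (hb : E x b) (hu : σ u = σ b) :
    T.lca x b ⊆ T.lca x u :=
  ((hT x b).1 hb).2 u hu

theorem exists_rel [Finite V] (hT : Explains T σ E) (x : V) {u : V} (hu : σ u ≠ σ x) :
    ∃ b, σ b = σ u ∧ E x b := by
  obtain ⟨b, hb, hmin⟩ := (Set.toFinite {v | σ v = σ u}).exists_minimalFor (T.lca x) _ ⟨u, rfl⟩
  refine ⟨b, hb, (hT x b).2 ⟨fun h ↦ hu (hb ▸ h.symm), fun v hv ↦ ?_⟩⟩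
  rcases T.lca_subset_or_subset x b v with h | h
  · exact h
  · exact hmin (hv.trans hb) h

theorem rel_iff_mem_lca [Finite V] (hT : Explains T σ E) {x b u : V} (hb : E x b) (hu : σ u = σ b) :
    E x u ↔ u ∈ T.lca x b := by
  refine ⟨fun hxu ↦ hT.lca_subset_lca hxu hu.symm (T.mem_lca_right x u), fun hub ↦ ?_⟩
  refine (hT x u).2 ⟨hu ▸ hT.color_ne hb, fun v hv ↦ ?_⟩
  exact (T.lca_subset (T.lca_mem x b) (T.mem_lca_left x b) hub).trans
    (hT.lca_subset_lca hb (hv.trans hu))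

end Explains

section Rbin

variable {V C : Type*} {E : V → V → Prop} {σ : V → C}

theorem fst_ne_of_mem_rbin {t : V × V × V} (ht : t ∈ Rbin E σ) : t.1 ≠ t.2.1 := by
  rcases ht with ⟨hσ, -⟩ | ⟨-, -, hne, -⟩
  · exact fun h ↦ hσ (congrArg σ h)
  · exact hne

/-- A tree displaying `R^bin(G,σ)` separates every out-neighbour `y` of `x` from a closer leaf
`y'` of its color: an informative triple `xy|y'` if `y'` is not an out-neighbour, and the triple
`y'y|x` if it is. -/
theorem explains_of_displaysSet_rbin [Finite V] (hG : IsBMG E σ) {T : PhyloTree V}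
    (hT : T.DisplaysSet (Rbin E σ)) : Explains T σ E := by
  obtain ⟨T₀, hT₀⟩ := hG
  intro x y
  constructor
  · intro hxy
    refine ⟨hT₀.color_ne hxy, fun y' hy' ↦ ?_⟩
    by_contra hsub
    have hlt : T.lca x y' ⊂ T.lca x y :=
      ((T.lca_subset_or_subset x y y').resolve_left hsub).ssubset_of_not_subset hsub
    by_cases hxy' : E x y'
    · have hne : y' ≠ y := by rintro rfl; exact hsub le_rfl
      have hd := hT (y', y, x) (.inr ⟨hy' ▸ hT₀.color_ne hxy, hy', hne, hxy', hxy⟩)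
      have h := (T.lca_eq_lca_of_ssubset hlt).symm ▸ hd.2.2.2.1
      rw [T.lca_comm y' x] at h
      exact h.not_subset hlt.subset
    · exact hsub (hT (x, y, y') (.inl ⟨hT₀.color_ne hxy, hy'.symm, hxy, hxy'⟩)).2.2.2.1.subset
  · rintro ⟨hσ, hmin⟩
    obtain ⟨b, hb, hxb⟩ := hT₀.exists_rel x (Ne.symm hσ)
    by_contra hxy
    exact (hT (x, b, y) (.inl ⟨hb ▸ hσ, hb, hxb, hxy⟩)).2.2.2.1.not_subset (hmin b hb)

end Rbin

namespace PhyloTree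

variable {V : Type*}

def IsParent (T : PhyloTree V) (M B : Set V) : Prop :=
  M ∈ T.clusters ∧ B ⊂ M ∧ ∀ A ∈ T.clusters, B ⊂ A → M ⊆ A

theorem exists_isParent [Finite V] (T : PhyloTree V) {B : Set V} (hB : B ∈ T.clusters)
    (hBu : B ≠ Set.univ) : ∃ M, T.IsParent M B := by
  obtain ⟨M, ⟨hM, hBM⟩, hmin⟩ := (Set.toFinite {A | A ∈ T.clusters ∧ B ⊂ A}).exists_minimal
    ⟨Set.univ, T.univ_mem, Set.ssubset_univ_iff.2 hBu⟩
  obtain ⟨v, hv⟩ := T.nonempty_of_mem B hB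
  refine ⟨M, hM, hBM, fun A hA hBA ↦ ?_⟩
  rcases T.subset_or_subset_of_mem hM hA (hBM.subset hv) (hBA.subset hv) with h | h
  · exact h
  · exact hmin ⟨hA, hBA⟩ h

variable [Finite V] {T T' : PhyloTree V} {B M : Set V} {x y y' : V}

theorem contract_lca_of_lca_eq (hT' : T'.clusters = T.clusters \ {B}) (hM : T.IsParent M B)
    (h : T.lca x y = B) : T'.lca x y = M := by
  obtain ⟨hMT, hBM, hmin⟩ := hM
  have hx : x ∈ B := h ▸ T.mem_lca_left x y
  have hy : y ∈ B := h ▸ T.mem_lca_right x y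
  refine T'.lca_eq_of_forall (hT' ▸ ⟨hMT, hBM.ne'⟩) (hBM.subset hx) (hBM.subset hy) ?_
  rw [hT']
  rintro A ⟨hA, hAB⟩ hxA hyA
  exact hmin A hA (Set.ssubset_iff_subset_ne.2 ⟨h ▸ T.lca_subset hA hxA hyA, Ne.symm hAB⟩)

theorem contract_lca_of_lca_ne (hT' : T'.clusters = T.clusters \ {B}) (h : T.lca x y ≠ B) :
    T'.lca x y = T.lca x y := by
  refine T'.lca_eq_of_forall (hT' ▸ ⟨T.lca_mem x y, h⟩) (T.mem_lca_left x y)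
    (T.mem_lca_right x y) ?_
  rw [hT']
  exact fun A hA hxA hyA ↦ T.lca_subset hA.1 hxA hyA

theorem contract_lca_subset_lca (hT' : T'.clusters = T.clusters \ {B}) (hM : T.IsParent M B)
    (h : T.lca x y ⊆ T.lca x y') : T'.lca x y ⊆ T'.lca x y' := by
  by_cases h₁ : T.lca x y = B <;> by_cases h₂ : T.lca x y' = B
  · rw [contract_lca_of_lca_eq hT' hM h₁, contract_lca_of_lca_eq hT' hM h₂]
  · rw [contract_lca_of_lca_eq hT' hM h₁, contract_lca_of_lca_ne hT' h₂]
    exact hM.2.2 _ (T.lca_mem x y') (Set.ssubset_iff_subset_ne.2 ⟨h₁ ▸ h, Ne.symm h₂⟩)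
  · rw [contract_lca_of_lca_ne hT' h₁, contract_lca_of_lca_eq hT' hM h₂]
    exact (h₂ ▸ h).trans hM.2.1.subset
  · rwa [contract_lca_of_lca_ne hT' h₁, contract_lca_of_lca_ne hT' h₂]

theorem lca_subset_lca_of_contract (hT' : T'.clusters = T.clusters \ {B}) (hM : T.IsParent M B)
    (h : T'.lca x y ⊆ T'.lca x y') :
    T.lca x y ⊆ T.lca x y' ∨ T.lca x y' = B ∧ T.lca x y = M := by
  by_cases h₁ : T.lca x y = B <;> by_cases h₂ : T.lca x y' = B
  · exact .inl (h₁.trans h₂.symm).subset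
  · rw [contract_lca_of_lca_eq hT' hM h₁, contract_lca_of_lca_ne hT' h₂] at h
    exact .inl (h₁ ▸ hM.2.1.subset.trans h)
  · rw [contract_lca_of_lca_ne hT' h₁, contract_lca_of_lca_eq hT' hM h₂] at h
    rcases T.subset_or_subset_of_mem (T.lca_mem x y) (T.lca_mem x y') (T.mem_lca_left x y)
      (T.mem_lca_left x y') with h' | h'
    · exact .inl h'
    · exact .inr ⟨h₂, h.antisymm (hM.2.2 _ (T.lca_mem x y)
        (Set.ssubset_iff_subset_ne.2 ⟨h₂ ▸ h', Ne.symm h₁⟩))⟩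
  · rw [contract_lca_of_lca_ne hT' h₁, contract_lca_of_lca_ne hT' h₂] at h
    exact .inl h

end PhyloTree

section LRT

variable {V C : Type*} [Finite V] {E : V → V → Prop} {σ : V → C}

theorem explains_of_contract {T T' : PhyloTree V} {B M : Set V} (hT : Explains T σ E)
    (hT' : T'.clusters = T.clusters \ {B}) (hM : T.IsParent M B)
    (hno : ¬∃ x b y, E x b ∧ T.lca x b = B ∧ σ y = σ b ∧ T.lca x y = M) :
    Explains T' σ E := by
  intro x y
  refine ⟨fun hxy ↦ ?_, fun ⟨hσ, hmin⟩ ↦ ?_⟩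
  · obtain ⟨hσ, hmin⟩ := (hT x y).1 hxy
    exact ⟨hσ, fun y' hy' ↦ PhyloTree.contract_lca_subset_lca hT' hM (hmin y' hy')⟩
  · obtain ⟨b, hb, hxb⟩ := hT.exists_rel x (Ne.symm hσ)
    rcases PhyloTree.lca_subset_lca_of_contract hT' hM (hmin b hb) with h | ⟨hB, hM'⟩
    · exact (hT x y).2 ⟨hσ, fun y' hy' ↦ h.trans (hT.lca_subset_lca hxb (hy'.trans hb.symm))⟩
    · exact absurd ⟨x, b, y, hxb, hB, hb.symm, hM'⟩ hno

theorem IsLRT.exists_witness {T : PhyloTree V} (hT : IsLRT T σ E) {B : Set V}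
    (hB : B ∈ T.clusters) (hBu : B ≠ Set.univ) (hB1 : 1 < B.ncard) :
    ∃ x b y, E x b ∧ T.lca x b = B ∧ σ y = σ b ∧ y ∉ B ∧ ∀ A ∈ T.clusters, B ⊂ A → y ∈ A := by
  obtain ⟨M, hM⟩ := T.exists_isParent hB hBu
  have hsingleton (v : V) : {v} ≠ B := by rintro rfl; simp at hB1
  by_contra hno
  refine hT.2 B hB hBu hB1 ⟨T.clusters \ {B}, fun A hA ↦ T.nonempty_of_mem A hA.1,
    ⟨T.univ_mem, hBu.symm⟩, fun v ↦ ⟨T.singleton_mem v, hsingleton v⟩,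
    fun A hA A' hA' ↦ T.nested A hA.1 A' hA'.1⟩ rfl (explains_of_contract hT.1 rfl hM ?_)
  rintro ⟨x, b, y, hxb, hxbB, hyb, hxyM⟩
  have hyM : y ∈ M := hxyM ▸ T.mem_lca_right x y
  have hyB : y ∉ B := fun hyB ↦ hM.2.1.not_subset <|
    hxyM ▸ T.lca_subset hB (hxbB ▸ T.mem_lca_left x b) hyB
  exact hno ⟨x, b, y, hxb, hxbB, hyb, hyB, fun A hA hBA ↦ hM.2.2 A hA hBA hyM⟩

end LRT

section Refines

variable {V C : Type*} [Finite V] {E : V → V → Prop} {σ : V → C} {T₁ T₂ : PhyloTree V}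
  {B : Set V} {x b : V}

theorem Explains.mem_of_mem_lca (h₁ : Explains T₁ σ E) (h₂ : Explains T₂ σ E)
    (hB : B ∈ T₁.clusters) (hxb : E x b) (hxbB : T₁.lca x b = B) {q u : V} (hq : q ∈ B)
    (hu : u ∈ T₂.lca x q) (hub : σ u = σ b) : u ∈ B := by
  have hmB (v : V) (hv : σ v = σ b) : v ∈ T₂.lca x b ↔ v ∈ B := by
    rw [← h₂.rel_iff_mem_lca hxb hv, h₁.rel_iff_mem_lca hxb hv, hxbB]
  by_cases hum : u ∈ T₂.lca x b
  · exact (hmB u hub).1 hum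
  have hmL : T₂.lca x b ⊂ T₂.lca x q := by
    rcases T₂.lca_subset_or_subset x b q with h | h
    · exact h.ssubset_of_not_subset fun h' ↦ hum (h' hu)
    · exact absurd (h hu) hum
  have hqm : q ∉ T₂.lca x b := fun h ↦
    hmL.not_subset (T₂.lca_subset (T₂.lca_mem x b) (T₂.mem_lca_left x b) h)
  obtain ⟨b', hb', hqb'⟩ := h₁.exists_rel q (u := b) fun h ↦ hqm ((hmB q h.symm).2 hq)
  have hqb'B : T₁.lca q b' ⊆ B := (h₁.lca_subset_lca hqb' hb'.symm).trans
    (T₁.lca_subset hB hq (hxbB ▸ T₁.mem_lca_right x b))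
  have hb'm : b' ∈ T₂.lca x b := (hmB b' hb').2 (hqb'B (T₁.mem_lca_right q b'))
  have hL : T₂.lca x q = T₂.lca q b' := by
    rw [T₂.lca_comm q b']
    exact T₂.lca_eq_lca_of_ssubset
      ((T₂.lca_subset (T₂.lca_mem x b) (T₂.mem_lca_left x b) hb'm).trans_ssubset hmL)
  have hqu : E q u := (h₂.rel_iff_mem_lca hqb' (hub.trans hb'.symm)).2 (hL ▸ hu)
  exact hqb'B ((h₁.rel_iff_mem_lca hqb' (hub.trans hb'.symm)).1 hqu)

/-- Let `L` be the least cluster of `T₂` containing `B`. A leaf `z ∈ L \ B` would have all its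
out-neighbours of color `σ b` inside `L`, hence inside `B`; then, back in `T₁`, `y` would be one
of them. -/
theorem Explains.mem_clusters_of_witness (h₁ : Explains T₁ σ E) (h₂ : Explains T₂ σ E)
    (hB : B ∈ T₁.clusters) (hxb : E x b) (hxbB : T₁.lca x b = B) {y : V} (hyb : σ y = σ b)
    (hyB : y ∉ B) (hy : ∀ A ∈ T₁.clusters, B ⊂ A → y ∈ A) : B ∈ T₂.clusters := by
  have hxB : x ∈ B := hxbB ▸ T₁.mem_lca_left x b
  have hbB : b ∈ B := hxbB ▸ T₁.mem_lca_right x b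
  obtain ⟨q, hqB, hmax⟩ := B.toFinite.exists_maximalFor (T₂.lca x) B ⟨x, hxB⟩
  have hBL : B ⊆ T₂.lca x q := fun p hp ↦ by
    rcases T₂.lca_subset_or_subset x p q with h | h
    · exact h (T₂.mem_lca_right x p)
    · exact hmax hp h (T₂.mem_lca_right x p)
  have hcolor (u : V) (hu : u ∈ T₂.lca x q) (hub : σ u = σ b) : u ∈ B :=
    h₁.mem_of_mem_lca h₂ hB hxb hxbB hqB hu hub
  suffices T₂.lca x q ⊆ B from (hBL.antisymm this) ▸ T₂.lca_mem x q
  intro z hzL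
  by_contra hzB
  obtain ⟨b', hb', hzb'⟩ := h₂.exists_rel z (u := b) fun h ↦ hzB (hcolor z hzL h.symm)
  have hzb'L : T₂.lca z b' ⊆ T₂.lca x q := (h₂.lca_subset_lca hzb' hb'.symm).trans
    (T₂.lca_subset (T₂.lca_mem x q) hzL (hBL hbB))
  have hb'B : b' ∈ B := hcolor b' (hzb'L (T₂.mem_lca_right z b')) hb'
  have hBzb' : B ⊂ T₁.lca z b' := by
    rw [T₁.lca_comm]
    exact (T₁.subset_lca_of_mem_of_not_mem hB hb'B hzB).ssubset_of_not_subset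
      fun h ↦ hzB (h (T₁.mem_lca_right b' z))
  have hzy : E z y := (h₁.rel_iff_mem_lca hzb' (hyb.trans hb'.symm)).2
    (hy _ (T₁.lca_mem z b') hBzb')
  exact hyB (hcolor y (hzb'L ((h₂.rel_iff_mem_lca hzb' (hyb.trans hb'.symm)).1 hzy)) hyb)

theorem IsLRT.clusters_subset (hT₁ : IsLRT T₁ σ E) (hT₂ : Explains T₂ σ E) :
    T₁.clusters ⊆ T₂.clusters := by
  intro B hB
  by_cases hBu : B = Set.univ
  · exact hBu ▸ T₂.univ_mem
  by_cases hB1 : 1 < B.ncard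
  · obtain ⟨x, b, y, hxb, hxbB, hyb, hyB, hy⟩ := hT₁.exists_witness hB hBu hB1
    exact hT₁.1.mem_clusters_of_witness hT₂ hB hxb hxbB hyb hyB hy
  · obtain ⟨v, rfl⟩ := Set.ncard_eq_one.1 <| le_antisymm (not_lt.1 hB1) <|
      (Set.ncard_pos B.toFinite).2 (T₁.nonempty_of_mem B hB)
    exact T₂.singleton_mem v

end Refines

/-- Corollary: BRT refines LRT.
If `(G,σ)` is a binary-explainable BMG, then its binary-refinable tree (BRT), i.e. the
Aho tree of `R^bin(G,σ)`, is a refinement of its least resolved tree (LRT). -/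
theorem stmt5 {V C : Type*} [Fintype V] (E : V → V → Prop) (σ : V → C)
    (hbe : BinaryExplainable E σ)
    (Tbrt Tlrt : PhyloTree V)
    (hbrt : IsAhoTree (Rbin E σ) Tbrt) (hlrt : IsLRT Tlrt σ E) :
    Tbrt.Refines Tlrt := by
  obtain ⟨T, -, hT⟩ := hbe
  have hdisplays : Tbrt.DisplaysSet (Rbin E σ) := hbrt.displaysSet fun _ ↦ fst_ne_of_mem_rbin
  exact hlrt.clusters_subset (explains_of_displaysSet_rbin ⟨T, hT⟩ hdisplays)
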